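/- arXiv:2307.04362 — 2 statements merged into one kernel-verified Lean document; each statement's English description precedes it below -/
import Mathlib

section
/- If f:[0,∞)→ℝ is superquadratic and nonnegative (f(x) ≥ 0 for all x ≥ 0), then f is convex on [0,∞) and f(0) = 0. -/
open Matrix
open scoped ComplexOrder

/-- A function `f : [0,∞) → ℝ` is superquadratic if for every `t ≥ 0` there is a constant
`C` with `f s ≥ f t + C * (s - t) + f |s - t|` for all `s ≥ 0`. -/
def Superquadratic (f : ℝ → ℝ) : Prop :=
  ∀ t : ℝ, 0 ≤ t → ∃ C : ℝ, ∀ s : ℝ, 0 ≤ s → f t + C * (s - t) + f |s - t| ≤ f s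

/-- Apply a real function to a matrix via the functional calculus (junk value `0` if the
matrix is not Hermitian). -/
noncomputable def mfun {n : ℕ} (f : ℝ → ℝ) (A : Matrix (Fin n) (Fin n) ℂ) :
    Matrix (Fin n) (Fin n) ℂ :=
  if h : A.IsHermitian then h.cfc f else 0

/-- `|A| = √(Aᴴ A)`. -/
noncomputable def matAbs {n : ℕ} (A : Matrix (Fin n) (Fin n) ℂ) : Matrix (Fin n) (Fin n) ℂ :=
  (Matrix.posSemidef_conjTranspose_mul_self A).1.eigenvectorUnitary.1 *
    Matrix.diagonal ((↑) ∘ (√·) ∘ (Matrix.posSemidef_conjTranspose_mul_self A).1.eigenvalues) *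
    (star (Matrix.posSemidef_conjTranspose_mul_self A).1.eigenvectorUnitary : Matrix (Fin n) (Fin n) ℂ)

/-- Largest eigenvalue of a Hermitian matrix (junk value `0` otherwise). -/
noncomputable def lmax {n : ℕ} (A : Matrix (Fin n) (Fin n) ℂ) : ℝ :=
  if h : A.IsHermitian then ⨆ i, h.eigenvalues i else 0

/-- Smallest eigenvalue of a Hermitian matrix (junk value `0` otherwise). -/
noncomputable def lmin {n : ℕ} (A : Matrix (Fin n) (Fin n) ℂ) : ℝ :=
  if h : A.IsHermitian then ⨅ i, h.eigenvalues i else 0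

/-- `k`-th largest eigenvalue (`k = 0` gives the largest) of a Hermitian matrix
(junk value `0` otherwise). -/
noncomputable def lkth {n : ℕ} (A : Matrix (Fin n) (Fin n) ℂ) (k : Fin n) : ℝ :=
  if h : A.IsHermitian then (h.eigenvalues ∘ Tuple.sort h.eigenvalues) k.rev else 0

/-- The quadratic form `⟨Ax, x⟩` as a complex number. -/
noncomputable def qf {n : ℕ} (A : Matrix (Fin n) (Fin n) ℂ) (x : Fin n → ℂ) : ℂ :=
  star x ⬝ᵥ A *ᵥ x

/-- Löwner order: `A ⊑ B` iff `B - A` is positive semidefinite. -/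
def Loewner {n : ℕ} (A B : Matrix (Fin n) (Fin n) ℂ) : Prop :=
  (B - A).PosSemidef

/-- a nonnegative superquadratic function is convex on `[0,∞)` and `f 0 = 0`. -/
theorem superquadratic_nonneg_convex (f : ℝ → ℝ) (hf : Superquadratic f)
    (hpos : ∀ x : ℝ, 0 ≤ x → 0 ≤ f x) :
    ConvexOn ℝ (Set.Ici (0 : ℝ)) f ∧ f 0 = 0 := by
  have h0 : f 0 = 0 := by
    obtain ⟨C, hC⟩ := hf 0 le_rfl
    have := hC 0 le_rfl
    simp at this
    linarith [hpos 0 le_rfl]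
  refine ⟨⟨convex_Ici 0, ?_⟩, h0⟩
  intro x hx y hy a b ha hb hab
  have hx' : (0:ℝ) ≤ x := hx
  have hy' : (0:ℝ) ≤ y := hy
  have ht : 0 ≤ a * x + b * y := by positivity
  obtain ⟨C, hC⟩ := hf (a * x + b * y) ht
  have h1 := hC x hx'
  have h2 := hC y hy'
  have n1 := hpos |x - (a*x+b*y)| (abs_nonneg _)
  have n2 := hpos |y - (a*x+b*y)| (abs_nonneg _)
  have h1' := mul_le_mul_of_nonneg_left h1 ha
  have h2' := mul_le_mul_of_nonneg_left h2 hb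
  simp only [smul_eq_mul]
  have key : a * (C * (x - (a*x+b*y))) + b * (C * (y - (a*x+b*y))) = C * (1 - (a+b)) * (a*x+b*y) := by ring
  rw [hab] at key
  have habf : a * f (a*x+b*y) + b * f (a*x+b*y) = f (a*x+b*y) := by
    rw [← add_mul, hab, one_mul]
  nlinarith [h1', h2', key, habf, mul_nonneg ha n1, mul_nonneg hb n2]
end

section
/- If f:[0,∞)→ℝ is superquadratic, then for all s, t ≥ 0 and α ∈ [0,1]: f(αt + (1−α)s) ≤ α f(t) + (1−α) f(s) − α f((1−α)|t−s|) − (1−α) f(α|t−s|). -/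
open Matrix
open scoped ComplexOrder

/-- the Jensen-type inequality for superquadratic functions. -/
theorem superquadratic_jensen (f : ℝ → ℝ) (hf : Superquadratic f) :
    ∀ s t α : ℝ, 0 ≤ s → 0 ≤ t → α ∈ Set.Icc (0 : ℝ) 1 →
      f (α * t + (1 - α) * s) ≤
        α * f t + (1 - α) * f s - α * f ((1 - α) * |t - s|) - (1 - α) * f (α * |t - s|) := by
  intro s t α hs ht hα
  obtain ⟨hα0, hα1⟩ := hα
  set m := α * t + (1 - α) * s with hm
  have hm0 : 0 ≤ m := add_nonneg (mul_nonneg hα0 ht) (mul_nonneg (by linarith) hs)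
  obtain ⟨C, hC⟩ := hf m hm0
  have h1 := hC t ht
  have h2 := hC s hs
  have e1 : t - m = (1 - α) * (t - s) := by rw [hm]; ring
  have e2 : s - m = α * (s - t) := by rw [hm]; ring
  have a1 : |t - m| = (1 - α) * |t - s| := by
    rw [e1, abs_mul, abs_of_nonneg (by linarith)]
  have a2 : |s - m| = α * |t - s| := by
    rw [e2, abs_mul, abs_of_nonneg hα0, abs_sub_comm]
  rw [a1, e1] at h1
  rw [a2, e2] at h2
  nlinarith [mul_le_mul_of_nonneg_left h1 hα0,
    mul_le_mul_of_nonneg_left h2 (by linarith : (0:ℝ) ≤ 1 - α)]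
end
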